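/- Fix an integer λ ≥ 3 and a real ε > 0, and consider the 2NC-TAP instance with V = {1, …, λ+1}, spanning tree T the path with edges {k, k+1} for k ∈ [λ] (cost 0), links ℓ_k = {k, k+2} with cost(ℓ_k) = 1/k for k ∈ [λ−1], and link ℓ̃ = {1, λ+1} with cost(ℓ̃) = 1+ε. Then: (a) T ∪ {ℓ̃} is 2-node-connected, so the minimum cost of a feasible 2NC-TAP solution is at most 1+ε; and (b) every greedy run on this instance picks exactly the links ℓ_{λ−1}, ℓ_{λ−2}, …, ℓ_1 in this order, with total cost H(λ−1). Hence the greedy algorithm returns a solution of cost H(λ−1) while the optimum is at most 1+ε. -/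

import Mathlib

/-!
Deleting an inner node `u` of the path `0, …, λ` leaves the two sides of `u`, and a set of links
reconnects them exactly when one of its links jumps over `u`. So once the inner nodes
`c + 1, …, λ − 1` are fixed, the link `{k, k + 2}` still helps only node `k + 1` (if `k < c`), at
ratio `1/(k + 1)`, while the long link helps the `c` nodes `1, …, c`, at ratio `(1 + ε)/c`. The best
ratio `1/c` is attained by `{c − 1, c + 1}` alone, so greedy fixes the inner nodes from right to
left, paying `1/c` for the `c`-th one: `H(λ − 1)` in total.
-/

open scoped Classical
open Finset
open Fin.NatCast

namespace TwoNCTAP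

variable {V : Type*}

/-- The graph `H` with the vertex `u` "deleted": all edges incident to `u` are removed,
so that `u` becomes an isolated vertex. -/
def delVert (H : SimpleGraph V) (u : V) : SimpleGraph V where
  Adj a b := H.Adj a b ∧ a ≠ u ∧ b ≠ u
  symm := ⟨by rintro a b ⟨h, ha, hb⟩; exact ⟨h.symm, hb, ha⟩⟩
  loopless := ⟨by rintro a ⟨h, -, -⟩; exact H.irrefl h⟩

/-- The partition of `V ∖ {u}` into the vertex sets of the connected components of `H − u`. -/
def compPartition (H : SimpleGraph V) (u : V) : Set (Set V) :=
  {S | ∃ v, v ≠ u ∧ S = {w | (delVert H u).Reachable v w}}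

/-- `P` is a partition of the set `S`. -/
def IsPartitionOf (P : Set (Set V)) (S : Set V) : Prop :=
  (∀ B ∈ P, B.Nonempty) ∧ (∀ B ∈ P, B ⊆ S) ∧ ∀ v ∈ S, ∃! B : Set V, B ∈ P ∧ v ∈ B

/-- `P ∈ Ptn⊇(comps(T−u))`: `P` is a partition of `V ∖ {u}` each of whose blocks is a
union of vertex sets of connected components of `T − u`. -/
def PtnSup (T : SimpleGraph V) (u : V) (P : Set (Set V)) : Prop :=
  IsPartitionOf P {v | v ≠ u} ∧ ∀ B ∈ compPartition T u, ∃ C ∈ P, B ⊆ C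

/-- An edge `e` crosses the partition `P` if its two endpoints lie in different blocks of `P`. -/
def Crosses (P : Set (Set V)) (e : Sym2 V) : Prop :=
  ∃ v w, e = s(v, w) ∧ ∃ B ∈ P, ∃ C ∈ P, B ≠ C ∧ v ∈ B ∧ w ∈ C

/-- `u` is a non-leaf node of `T`. -/
def NonLeaf (T : SimpleGraph V) (u : V) : Prop := 1 < (T.neighborSet u).ncard

/-- The links of the instance: the edges of `G` that are not edges of the tree `T`. -/
def links (G T : SimpleGraph V) : Set (Sym2 V) := G.edgeSet \ T.edgeSet

variable [Fintype V]

/-- Feasibility for the partition LP (P) of the 2NC-TAP instance `(G, T, cost)`. -/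
def FeasibleP (G T : SimpleGraph V) (x : Sym2 V → ℝ) : Prop :=
  (∀ ℓ ∈ links G T, 0 ≤ x ℓ) ∧
  ∀ u : V, NonLeaf T u → ∀ P : Set (Set V), PtnSup T u P →
    (P.ncard : ℝ) - 1 ≤
      ∑ ℓ ∈ Finset.univ.filter (fun ℓ : Sym2 V => ℓ ∈ links G T ∧ Crosses P ℓ), x ℓ


/-- The tree `T` together with a set `F` of links added as edges. -/
def withLinks (T : SimpleGraph V) (F : Set (Sym2 V)) : SimpleGraph V :=
  T ⊔ SimpleGraph.fromEdgeSet F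

/-- The current partition `𝒫^i_u` (0-indexed): the partition of `V ∖ {u}` into the vertex
sets of the connected components of `(T ∪ {ℓ_0, …, ℓ_{i−1}}) − u`. -/
def curPtn {m : ℕ} (T : SimpleGraph V) (ℓseq : Fin m → Sym2 V) (i : ℕ) (u : V) :
    Set (Set V) :=
  compPartition (withLinks T {e | ∃ j : Fin m, (j : ℕ) < i ∧ ℓseq j = e}) u

/-- `inc^i(e)`: the set of non-leaf nodes `u` of `T` whose current partition (at the start
of iteration `i`, 0-indexed) is crossed by the link `e`. -/
def incSet {m : ℕ} (T : SimpleGraph V) (ℓseq : Fin m → Sym2 V) (i : ℕ)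
    (e : Sym2 V) : Set V :=
  {u | NonLeaf T u ∧ Crosses (curPtn T ℓseq i u) e}

/-- A greedy run on the 2NC-TAP instance `(G, T, cost)`: a sequence of distinct links
`ℓ_0, …, ℓ_{m−1}` such that each `ℓ_i` minimizes the cost-coverage ratio at iteration `i`,
and at the end every current partition is trivial (i.e. `T` plus the picked links
is 2-node-connected). -/
def IsGreedyRun (G T : SimpleGraph V) (cost : Sym2 V → ℝ) (m : ℕ)
    (ℓseq : Fin m → Sym2 V) : Prop :=
  Function.Injective ℓseq ∧
  (∀ i, ℓseq i ∈ links G T) ∧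
  (∀ i : Fin m,
    (incSet T ℓseq (i : ℕ) (ℓseq i)).Nonempty ∧
    ∀ e ∈ links G T, (incSet T ℓseq (i : ℕ) e).Nonempty →
      cost (ℓseq i) / ((incSet T ℓseq (i : ℕ) (ℓseq i)).ncard : ℝ)
        ≤ cost e / ((incSet T ℓseq (i : ℕ) e).ncard : ℝ)) ∧
  ∀ u : V, NonLeaf T u → curPtn T ℓseq m u = {{v | v ≠ u}}

/-- `ν(u)`: the number of connected components of `T − u`. -/
noncomputable def nblocks (T : SimpleGraph V) (u : V) : ℕ := (compPartition T u).ncard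


/-- The `k`-th harmonic number `H(k) = 1 + 1/2 + ⋯ + 1/k`. -/
noncomputable def harm (k : ℕ) : ℝ := ∑ i ∈ Finset.range k, (1 : ℝ) / (i + 1)

/-- `H` is 2-node-connected: it has at least 3 nodes, is connected, and deleting any
single node leaves a connected graph. -/
def TwoNodeConnected {W : Type*} [Fintype W] (H : SimpleGraph W) : Prop :=
  3 ≤ Fintype.card W ∧ H.Connected ∧
    ∀ u v w : W, v ≠ u → w ≠ u → (delVert H u).Reachable v w

/-- The path graph on `Fin n`, with edges `{k, k+1}`. -/
def pathG (n : ℕ) : SimpleGraph (Fin n) :=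
  SimpleGraph.fromRel (fun i j => (i : ℕ) + 1 = (j : ℕ))

end TwoNCTAP

namespace TwoNCTAP

variable {V : Type*}

theorem iff_of_reachable {G : SimpleGraph V} (p : V → Prop)
    (hp : ∀ a b, G.Adj a b → (p a ↔ p b)) {v w : V} (h : G.Reachable v w) : p v ↔ p w := by
  obtain ⟨q⟩ := h
  induction q with
  | nil => rfl
  | cons hadj _ ih => exact (hp _ _ hadj).trans ih

theorem ne_of_reachable_delVert {H : SimpleGraph V} {u v w : V}
    (h : (delVert H u).Reachable v w) (hv : v ≠ u) : w ≠ u :=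
  (iff_of_reachable (G := delVert H u) (· ≠ u)
    (fun _ _ ⟨_, ha, hb⟩ => iff_of_true ha hb) h).1 hv

theorem crosses_compPartition_iff (H : SimpleGraph V) (u v w : V) :
    Crosses (compPartition H u) s(v, w) ↔
      v ≠ u ∧ w ≠ u ∧ ¬ (delVert H u).Reachable v w := by
  constructor
  · rintro ⟨v', w', hs, _, ⟨b, hb, rfl⟩, _, ⟨c, hc, rfl⟩, hBC, hv', hw'⟩
    have hr : ¬ (delVert H u).Reachable v' w' := fun h =>
      have hbc := (hv'.trans h).trans hw'.symm
      hBC <| Set.ext fun _ => ⟨hbc.symm.trans, hbc.trans⟩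
    have hv'u := ne_of_reachable_delVert hv' hb
    have hw'u := ne_of_reachable_delVert hw' hc
    rcases Sym2.eq_iff.1 hs with ⟨rfl, rfl⟩ | ⟨rfl, rfl⟩
    · exact ⟨hv'u, hw'u, hr⟩
    · exact ⟨hw'u, hv'u, fun h => hr h.symm⟩
  · rintro ⟨hv, hw, hr⟩
    exact ⟨v, w, rfl, _, ⟨v, hv, rfl⟩, _, ⟨w, hw, rfl⟩,
      fun h => hr ((Set.ext_iff.1 h w).2 .rfl), .rfl, .rfl⟩

theorem not_crosses_singleton (S : Set V) (e : Sym2 V) : ¬ Crosses {S} e := by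
  rintro ⟨-, -, -, B, rfl, C, rfl, hBC, -⟩
  exact hBC rfl

theorem links_withLinks_subset (T : SimpleGraph V) (L : Set (Sym2 V)) :
    links (withLinks T L) T ⊆ L := by
  rintro e ⟨heG, heT⟩
  rw [withLinks, SimpleGraph.edgeSet_sup, SimpleGraph.edgeSet_fromEdgeSet] at heG
  exact (heG.resolve_left heT).1

theorem mem_links_withLinks {T : SimpleGraph V} {L : Set (Sym2 V)} {e : Sym2 V} (he : e ∈ L)
    (hd : ¬ e.IsDiag) (hT : e ∉ T.edgeSet) : e ∈ links (withLinks T L) T := by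
  refine ⟨?_, hT⟩
  rw [withLinks, SimpleGraph.edgeSet_sup, SimpleGraph.edgeSet_fromEdgeSet]
  exact Or.inr ⟨he, hd⟩

section Path

variable {n : ℕ}

theorem pathG_eq_pathGraph : pathG n = SimpleGraph.pathGraph n := by
  ext a b
  simp only [pathG, SimpleGraph.fromRel_adj, SimpleGraph.pathGraph_adj, ne_eq, Fin.ext_iff]
  omega

theorem nonLeaf_pathG_iff (u : Fin n) : NonLeaf (pathG n) u ↔ 0 < (u : ℕ) ∧ (u : ℕ) + 1 < n := by
  rw [NonLeaf, Set.one_lt_ncard_iff, pathG_eq_pathGraph]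
  simp only [SimpleGraph.mem_neighborSet, SimpleGraph.pathGraph_adj, ne_eq, Fin.ext_iff]
  constructor
  · rintro ⟨a, b, ha, hb, hab⟩
    have := a.isLt
    have := b.isLt
    omega
  · rintro ⟨hu, hun⟩
    refine ⟨⟨(u : ℕ) - 1, by omega⟩, ⟨(u : ℕ) + 1, hun⟩, ?_, ?_, ?_⟩ <;>
      simp only [true_or] <;> omega

theorem reachable_of_adj_succ {G : SimpleGraph (Fin n)} {v w : Fin n} (hvw : v ≤ w)
    (hadj : ∀ x y : Fin n, v ≤ x → y ≤ w → (x : ℕ) + 1 = y → G.Adj x y) : G.Reachable v w := by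
  obtain ⟨d, hd⟩ : ∃ d, (w : ℕ) = v + d := ⟨w - v, by rw [Fin.le_def] at hvw; omega⟩
  induction d generalizing w with
  | zero => rw [Fin.ext (hd.trans (add_zero _))]
  | succ d ih =>
    let x : Fin n := ⟨v + d, by omega⟩
    have hxw : x ≤ w := by rw [Fin.le_def]; simp only [x]; omega
    have hvx : v ≤ x := by rw [Fin.le_def]; simp only [x]; omega
    exact (ih hvx (fun a b ha hb => hadj a b ha (hb.trans hxw)) rfl).trans
      (hadj x w hvx le_rfl (by simp only [x]; omega)).reachable

theorem reachable_delVert_of_lt_iff {H : SimpleGraph (Fin n)} (hH : pathG n ≤ H) {u v w : Fin n}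
    (hv : v ≠ u) (hw : w ≠ u) (hside : v < u ↔ w < u) : (delVert H u).Reachable v w := by
  wlog hvw : v ≤ w generalizing v w
  · exact (this hw hv hside.symm (le_of_not_ge hvw)).symm
  refine reachable_of_adj_succ hvw fun x y hx hy hxy => ⟨hH ?_, ?_, ?_⟩
  · rw [pathG_eq_pathGraph, SimpleGraph.pathGraph_adj]
    exact Or.inl hxy
  all_goals
    simp only [ne_eq, Fin.ext_iff, Fin.lt_def, Fin.le_def] at *
    omega

def Straddled (F : Set (Sym2 (Fin n))) (u : Fin n) : Prop :=
  ∃ a b, s(a, b) ∈ F ∧ a < u ∧ u < b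

theorem reachable_delVert_withLinks_pathG_iff (F : Set (Sym2 (Fin n))) {u v w : Fin n}
    (hv : v ≠ u) (hw : w ≠ u) :
    (delVert (withLinks (pathG n) F) u).Reachable v w ↔ (v < u ↔ w < u) ∨ Straddled F u := by
  have hH : pathG n ≤ withLinks (pathG n) F := le_sup_left
  constructor
  · intro h
    by_contra hcon
    rw [not_or] at hcon
    refine hcon.1 (iff_of_reachable (· < u) ?_ h)
    rintro a b ⟨hab | ⟨hF, hne⟩, ha, hb⟩
    · rw [pathG_eq_pathGraph, SimpleGraph.pathGraph_adj] at hab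
      simp only [ne_eq, Fin.ext_iff, Fin.lt_def] at *
      omega
    · by_contra hab
      rcases lt_or_gt_of_ne hne with h | h
      · exact hcon.2 ⟨a, b, hF, by grind, by grind⟩
      · exact hcon.2 ⟨b, a, Sym2.eq_swap ▸ hF, by grind, by grind⟩
  · rintro (hside | ⟨a, b, hF, hau, hub⟩)
    · exact reachable_delVert_of_lt_iff hH hv hw hside
    have hab : (delVert (withLinks (pathG n) F) u).Adj a b :=
      ⟨Or.inr ⟨hF, (hau.trans hub).ne⟩, hau.ne, hub.ne'⟩
    have to_a : ∀ x, x ≠ u → (delVert (withLinks (pathG n) F) u).Reachable x a := by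
      intro x hx
      by_cases hxu : x < u
      · exact reachable_delVert_of_lt_iff hH hx hau.ne (iff_of_true hxu hau)
      · exact (reachable_delVert_of_lt_iff hH hx hub.ne'
          (iff_of_false hxu hub.le.not_gt)).trans hab.reachable.symm
    exact (to_a v hv).trans (to_a w hw).symm

theorem crosses_compPartition_withLinks_pathG_iff (F : Set (Sym2 (Fin n))) {u a b : Fin n}
    (hab : a < b) :
    Crosses (compPartition (withLinks (pathG n) F) u) s(a, b) ↔
      a < u ∧ u < b ∧ ¬ Straddled F u := by
  rw [crosses_compPartition_iff]
  constructor
  · rintro ⟨ha, hb, hr⟩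
    rw [reachable_delVert_withLinks_pathG_iff F ha hb, not_or] at hr
    refine ⟨?_, ?_, hr.2⟩ <;> grind
  · rintro ⟨hau, hub, hs⟩
    refine ⟨hau.ne, hub.ne', ?_⟩
    rw [reachable_delVert_withLinks_pathG_iff F hau.ne hub.ne']
    exact fun h => h.elim (fun h => hub.not_gt (h.1 hau)) hs

end Path

section Greedy

variable {m : ℕ}

/-- The set `F^i` of the paper. -/
def picked (ℓseq : Fin m → Sym2 V) (i : ℕ) : Set (Sym2 V) :=
  {e | ∃ j : Fin m, (j : ℕ) < i ∧ ℓseq j = e}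

theorem incSet_pathG {n : ℕ} (ℓseq : Fin m → Sym2 (Fin n)) (i : ℕ) {a b : Fin n} (hab : a < b) :
    incSet (pathG n) ℓseq i s(a, b) = {u | a < u ∧ u < b ∧ ¬ Straddled (picked ℓseq i) u} := by
  ext u
  change NonLeaf _ u ∧ Crosses (compPartition (withLinks _ (picked ℓseq i)) u) _ ↔
    a < u ∧ u < b ∧ ¬ Straddled (picked ℓseq i) u
  rw [crosses_compPartition_withLinks_pathG_iff _ hab, nonLeaf_pathG_iff,
    and_iff_right_of_imp]
  rintro ⟨hau, hub, -⟩
  rw [Fin.lt_def] at hau hub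
  exact ⟨by omega, by omega⟩

theorem IsGreedyRun.incSet_eq_empty [Fintype V] {G T : SimpleGraph V} {cost : Sym2 V → ℝ}
    {ℓseq : Fin m → Sym2 V} (h : IsGreedyRun G T cost m ℓseq) (e : Sym2 V) :
    incSet T ℓseq m e = ∅ :=
  Set.eq_empty_of_forall_notMem fun u ⟨hu, hcross⟩ =>
    not_crosses_singleton _ _ (h.2.2.2 u hu ▸ hcross)

end Greedy

section TightExample

variable {lam : ℕ}

def shortLink (lam k : ℕ) : Sym2 (Fin (lam + 1)) :=
  s(((k : ℕ) : Fin (lam + 1)), ((k + 2 : ℕ) : Fin (lam + 1)))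

def longLink (lam : ℕ) : Sym2 (Fin (lam + 1)) :=
  s((0 : Fin (lam + 1)), ((lam : ℕ) : Fin (lam + 1)))

def tightLinks (lam : ℕ) : Set (Sym2 (Fin (lam + 1))) :=
  {e | (∃ k, k + 2 ≤ lam ∧ e = shortLink lam k) ∨ e = longLink lam}

/-- What greedy has picked once it has fixed the inner nodes `c + 1, …, lam − 1`. -/
def shortLinksFrom (lam c : ℕ) : Set (Sym2 (Fin (lam + 1))) :=
  {e | ∃ k, c ≤ k ∧ k + 2 ≤ lam ∧ shortLink lam k = e}

theorem val_natCast_of_le {j : ℕ} (hj : j ≤ lam) : ((j : ℕ) : Fin (lam + 1)).val = j :=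
  Fin.val_cast_of_lt (Nat.lt_succ_of_le hj)

theorem shortLink_mem_links {k : ℕ} (hk : k + 2 ≤ lam) :
    shortLink lam k ∈ links (withLinks (pathG (lam + 1)) (tightLinks lam)) (pathG (lam + 1)) := by
  refine mem_links_withLinks (Or.inl ⟨k, hk, rfl⟩) ?_ ?_
  · rw [shortLink, Sym2.mk_isDiag_iff, ← Fin.val_inj, val_natCast_of_le (by omega),
      val_natCast_of_le hk]
    omega
  · rw [shortLink, SimpleGraph.mem_edgeSet, pathG_eq_pathGraph, SimpleGraph.pathGraph_adj,
      val_natCast_of_le (by omega), val_natCast_of_le hk]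
    omega

theorem straddled_shortLinksFrom {c : ℕ} {u : Fin (lam + 1)} :
    Straddled (shortLinksFrom lam c) u ↔ c < u ∧ (u : ℕ) < lam := by
  constructor
  · rintro ⟨a, b, ⟨k, hck, hk, he⟩, hau, hub⟩
    rw [shortLink, Sym2.eq_iff, ← Fin.val_inj, ← Fin.val_inj, ← Fin.val_inj, ← Fin.val_inj,
      val_natCast_of_le (by omega), val_natCast_of_le hk] at he
    rw [Fin.lt_def] at hau hub
    omega
  · rintro ⟨hcu, hul⟩
    refine ⟨_, _, ⟨(u : ℕ) - 1, by omega, by omega, rfl⟩, ?_, ?_⟩ <;>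
      rw [Fin.lt_def, val_natCast_of_le (by omega)] <;> omega

variable {m : ℕ} {ℓseq : Fin m → Sym2 (Fin (lam + 1))} {i c : ℕ}

theorem incSet_shortLink (hpick : picked ℓseq i = shortLinksFrom lam c) {k : ℕ}
    (hk : k + 2 ≤ lam) :
    incSet (pathG (lam + 1)) ℓseq i (shortLink lam k) =
      if k < c then {((k + 1 : ℕ) : Fin (lam + 1))} else ∅ := by
  have hk0 := val_natCast_of_le (lam := lam) (j := k) (by omega)
  have hk1 := val_natCast_of_le (lam := lam) (j := k + 1) (by omega)
  have hk2 := val_natCast_of_le hk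
  rw [shortLink, incSet_pathG _ _ (by rw [Fin.lt_def, hk0, hk2]; omega), hpick]
  ext u
  simp only [straddled_shortLinksFrom, Set.mem_ofPred_eq, Fin.lt_def, hk0, hk2]
  split_ifs with h
  · rw [Set.mem_singleton_iff, ← Fin.val_inj, hk1]
    omega
  · simp only [Set.mem_empty_iff_false, iff_false]
    omega

theorem incSet_longLink (hpick : picked ℓseq i = shortLinksFrom lam c) (hc : c < lam) :
    incSet (pathG (lam + 1)) ℓseq i (longLink lam) = Set.Ioc 0 (c : Fin (lam + 1)) := by
  have hl := val_natCast_of_le (lam := lam) le_rfl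
  rw [longLink, incSet_pathG _ _ (by rw [Fin.lt_def, hl, Fin.val_zero]; omega), hpick]
  ext u
  simp only [straddled_shortLinksFrom, Set.mem_ofPred_eq, Set.mem_Ioc, Fin.lt_def, Fin.le_def, hl,
    val_natCast_of_le hc.le, Fin.val_zero]
  omega

theorem ncard_Ioc_natCast (hc : c ≤ lam) : (Set.Ioc 0 (c : Fin (lam + 1))).ncard = c := by
  rw [← Finset.coe_Ioc, Set.ncard_coe_finset, Fin.card_Ioc, val_natCast_of_le hc, Fin.val_zero,
    Nat.sub_zero]

theorem incSet_shortLink_pred (hpick : picked ℓseq i = shortLinksFrom lam c) (hc0 : 0 < c)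
    (hc : c < lam) :
    incSet (pathG (lam + 1)) ℓseq i (shortLink lam (c - 1)) = {(c : Fin (lam + 1))} := by
  rw [incSet_shortLink hpick (by omega), if_pos (by omega), Nat.sub_add_cancel hc0]

theorem IsGreedyRun.pick_eq_shortLink_pred {ε : ℝ} (hε : 0 < ε) {cost : Sym2 (Fin (lam + 1)) → ℝ}
    (hc1 : ∀ k : ℕ, k + 2 ≤ lam → cost (shortLink lam k) = 1 / (k + 1))
    (hc2 : cost (longLink lam) = 1 + ε)
    (hrun : IsGreedyRun (withLinks (pathG (lam + 1)) (tightLinks lam)) (pathG (lam + 1)) cost m ℓseq)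
    (i : Fin m) (hpick : picked ℓseq i = shortLinksFrom lam c) (hc : c < lam) :
    0 < c ∧ ℓseq i = shortLink lam (c - 1) := by
  obtain ⟨hne, hmin⟩ := hrun.2.2.1 i
  have hbest : 0 < c → cost (ℓseq i) / (incSet (pathG (lam + 1)) ℓseq i (ℓseq i)).ncard ≤ 1 / c :=
    fun hc0 => by
      have h := hmin _ (shortLink_mem_links (k := c - 1) (by omega))
        (by rw [incSet_shortLink_pred hpick hc0 hc]; exact Set.singleton_nonempty _)
      rwa [incSet_shortLink_pred hpick hc0 hc, Set.ncard_singleton, hc1 _ (by omega),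
        Nat.cast_pred hc0, sub_add_cancel, Nat.cast_one, div_one] at h
  rcases links_withLinks_subset _ _ (hrun.2.1 i) with ⟨k, hk, hℓ⟩ | hℓ
  · have hkc : k < c := by
      by_contra h
      rw [hℓ, incSet_shortLink hpick hk, if_neg h] at hne
      exact Set.not_nonempty_empty hne
    have h := hbest (by omega)
    rw [hℓ, incSet_shortLink hpick hk, if_pos hkc, Set.ncard_singleton, hc1 k hk, Nat.cast_one,
      div_one, one_div_le_one_div (by positivity) (by exact_mod_cast hkc.pos)] at h
    have : c ≤ k + 1 := by exact_mod_cast h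
    exact ⟨by omega, hℓ.trans (congrArg _ (by omega))⟩
  · rw [hℓ, incSet_longLink hpick hc] at hne
    have hc0 : 0 < c := by
      simpa [Fin.lt_def, val_natCast_of_le hc.le] using Set.nonempty_Ioc.1 hne
    have h := hbest hc0
    rw [hℓ, incSet_longLink hpick hc, ncard_Ioc_natCast hc.le, hc2,
      div_le_div_iff_of_pos_right (by exact_mod_cast hc0)] at h
    linarith

theorem picked_eq_shortLinksFrom (hi : i ≤ lam - 1) (him : i ≤ m)
    (hprev : ∀ j : Fin m, (j : ℕ) < i → ℓseq j = shortLink lam (lam - 2 - j)) :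
    picked ℓseq i = shortLinksFrom lam (lam - 1 - i) := by
  ext e
  constructor
  · rintro ⟨j, hj, rfl⟩
    exact ⟨lam - 2 - j, by omega, by omega, (hprev j hj).symm⟩
  · rintro ⟨k, hck, hk, rfl⟩
    refine ⟨⟨lam - 2 - k, by omega⟩, by simp only; omega, ?_⟩
    rw [hprev _ (by simp only; omega)]
    congr 1
    simp only
    omega

variable {ε : ℝ} {cost : Sym2 (Fin (lam + 1)) → ℝ}

theorem IsGreedyRun.prefix_eq_shortLinks (hε : 0 < ε)
    (hc1 : ∀ k : ℕ, k + 2 ≤ lam → cost (shortLink lam k) = 1 / (k + 1))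
    (hc2 : cost (longLink lam) = 1 + ε)
    (hrun : IsGreedyRun (withLinks (pathG (lam + 1)) (tightLinks lam)) (pathG (lam + 1)) cost m ℓseq)
    (hlam : 0 < lam) :
    ∀ i ≤ m, i ≤ lam - 1 ∧ ∀ j : Fin m, (j : ℕ) < i → ℓseq j = shortLink lam (lam - 2 - j) := by
  intro i
  induction i with
  | zero => exact fun _ => ⟨Nat.zero_le _, fun j hj => absurd hj (Nat.not_lt_zero _)⟩
  | succ i ih =>
    intro hi
    obtain ⟨hil, hprev⟩ := ih (by omega)
    obtain ⟨hpos, hpick⟩ := hrun.pick_eq_shortLink_pred hε hc1 hc2 ⟨i, hi⟩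
      (picked_eq_shortLinksFrom hil (by omega) hprev) (by omega)
    simp only at hpos hpick
    refine ⟨by omega, fun j hj => ?_⟩
    rcases Nat.lt_succ_iff_lt_or_eq.1 hj with hj | hj
    · exact hprev j hj
    · obtain rfl : j = ⟨i, hi⟩ := Fin.ext hj
      exact hpick.trans (congrArg _ (by simp only; omega))

theorem IsGreedyRun.length_eq_and_eq_shortLink (hε : 0 < ε)
    (hc1 : ∀ k : ℕ, k + 2 ≤ lam → cost (shortLink lam k) = 1 / (k + 1))
    (hc2 : cost (longLink lam) = 1 + ε)
    (hrun : IsGreedyRun (withLinks (pathG (lam + 1)) (tightLinks lam)) (pathG (lam + 1)) cost m ℓseq)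
    (hlam : 0 < lam) :
    m = lam - 1 ∧ ∀ i : Fin m, ℓseq i = shortLink lam (lam - 2 - i) := by
  obtain ⟨hm, hprev⟩ := hrun.prefix_eq_shortLinks hε hc1 hc2 hlam m le_rfl
  have hend := hrun.incSet_eq_empty (longLink lam)
  rw [incSet_longLink (picked_eq_shortLinksFrom hm le_rfl hprev) (by omega), Set.Ioc_eq_empty_iff,
    Fin.lt_def, Fin.val_zero, val_natCast_of_le (by omega)] at hend
  exact ⟨by omega, fun j => hprev j j.isLt⟩

theorem twoNodeConnected_withLinks_longLink (hlam : 2 ≤ lam) :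
    TwoNodeConnected (withLinks (pathG (lam + 1)) {longLink lam}) := by
  have hl := val_natCast_of_le (lam := lam) le_rfl
  refine ⟨by rw [Fintype.card_fin]; omega, ?_, fun u v w hv hw => ?_⟩
  · rw [withLinks, pathG_eq_pathGraph]
    exact (SimpleGraph.pathGraph_connected lam).mono le_sup_left
  rw [reachable_delVert_withLinks_pathG_iff _ hv hw]
  by_cases hu : 0 < (u : ℕ) ∧ (u : ℕ) < lam
  · exact Or.inr ⟨0, lam, rfl, by rw [Fin.lt_def]; exact hu.1, by rw [Fin.lt_def, hl]; exact hu.2⟩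
  · left
    have := u.isLt
    simp only [ne_eq, Fin.ext_iff, Fin.lt_def] at hv hw ⊢
    omega

theorem harm_eq_sum_fin_rev (n : ℕ) :
    harm n = ∑ i : Fin n, (1 : ℝ) / (((n - 1 - i : ℕ) : ℝ) + 1) := by
  rw [harm, Fin.sum_univ_eq_sum_range (fun i => (1 : ℝ) / (((n - 1 - i : ℕ) : ℝ) + 1)),
    Finset.sum_range_reflect (fun i => (1 : ℝ) / ((i : ℝ) + 1))]

end TightExample

-- Vertices are 0-indexed: the paper's `ℓ_k = {k, k + 2}` is `s(k − 1, k + 1)` here.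
/-- The tight example for the greedy algorithm: on the path
`1, …, λ+1` (here `0, …, λ`, 0-indexed) with links `ℓ_k = {k, k+2}` of cost `1/k`
(0-indexed: `{j, j+2}` of cost `1/(j+1)`) and the long link `ℓ̃ = {1, λ+1}`
(0-indexed: `{0, λ}`) of cost `1+ε`: (a) `T ∪ {ℓ̃}` is 2-node-connected, so the optimum
is at most `1+ε`; and (b) every greedy run picks exactly the links
`ℓ_{λ−1}, ℓ_{λ−2}, …, ℓ_1` in this order, of total cost `H(λ−1)`. -/
theorem greedy_tight_example
    (lam : ℕ) (hlam3 : 3 ≤ lam) (ε : ℝ) (hε : 0 < ε)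
    (T : SimpleGraph (Fin (lam + 1))) (hT : T = pathG (lam + 1))
    (Lk : Set (Sym2 (Fin (lam + 1))))
    (hLk : Lk = {e | (∃ k : ℕ, k + 2 ≤ lam ∧
          e = s(((k : ℕ) : Fin (lam + 1)), ((k + 2 : ℕ) : Fin (lam + 1)))) ∨
        e = s((0 : Fin (lam + 1)), ((lam : ℕ) : Fin (lam + 1)))})
    (G : SimpleGraph (Fin (lam + 1))) (hG : G = withLinks T Lk)
    (cost : Sym2 (Fin (lam + 1)) → ℝ)
    (hc1 : ∀ k : ℕ, k + 2 ≤ lam →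
      cost s(((k : ℕ) : Fin (lam + 1)), ((k + 2 : ℕ) : Fin (lam + 1))) = 1 / (k + 1))
    (hc2 : cost s((0 : Fin (lam + 1)), ((lam : ℕ) : Fin (lam + 1))) = 1 + ε) :
    TwoNodeConnected
      (withLinks T {s((0 : Fin (lam + 1)), ((lam : ℕ) : Fin (lam + 1)))}) ∧
    (∃ F : Finset (Sym2 (Fin (lam + 1))), ↑F ⊆ Lk ∧
      TwoNodeConnected (withLinks T (↑F : Set (Sym2 (Fin (lam + 1))))) ∧
      ∑ e ∈ F, cost e ≤ 1 + ε) ∧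
    ∀ (m : ℕ) (ℓseq : Fin m → Sym2 (Fin (lam + 1))),
      IsGreedyRun G T cost m ℓseq →
        m = lam - 1 ∧
        (∀ i : Fin m, ℓseq i =
          s(((lam - 2 - (i : ℕ) : ℕ) : Fin (lam + 1)),
            ((lam - (i : ℕ) : ℕ) : Fin (lam + 1)))) ∧
        ∑ i : Fin m, cost (ℓseq i) = harm (lam - 1) := by
  subst hT hLk hG
  have h2nc := twoNodeConnected_withLinks_longLink (lam := lam) (by omega)
  refine ⟨h2nc, ⟨{longLink lam}, by simp [longLink], by simpa using h2nc, by rw [Finset.sum_singleton]; exact hc2.le⟩,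
    fun m ℓseq hrun => ?_⟩
  obtain ⟨rfl, hpicks⟩ := hrun.length_eq_and_eq_shortLink hε hc1 hc2 (by omega)
  refine ⟨rfl, fun i => ?_, ?_⟩
  · have := i.isLt
    rw [hpicks i, shortLink, show lam - 2 - i + 2 = lam - i by omega]
  · rw [harm_eq_sum_fin_rev]
    refine Finset.sum_congr rfl fun i _ => ?_
    have := i.isLt
    rw [hpicks i, show lam - 1 - 1 - i = lam - 2 - i by omega]
    exact hc1 _ (by omega)

end TwoNCTAP
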